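/- Constraint propagation for diffractive gravitational waves: let U, V, M, Y be smooth functions of (θ,η,v) satisfying the system U_{θv} − U_θ U_v = ½ e^{−(U+V+M)} A, V_{θv} − ½(U_θ V_v + U_v V_θ) = ½ e^{−(U+V+M)} B, M_{θv} + ½(U_θ U_v − V_v V_θ) = ½ e^{−(U+V+M)} C, and (φ+ψ)_θ = ψ(U+V)_θ, where D_η = e^U(∂_η + Y∂_θ), φ = D_η M − e^U Y_θ, ψ = D_η(U+V), A = D_η φ + D_η ψ − ½φ² − φψ − ψ², B = −D_η φ + ½φ², C = −D_η ψ − ½φ² + ψ². Then the constraint function F = U_{θθ} − ½(U_θ² + V_θ²) + U_θ M_θ satisfies F_v = U_v F. -/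

import Mathlib

noncomputable section

/-- ∂θ : partial derivative in the first (fast phase) variable θ. -/
def pθ (f : ℝ × ℝ × ℝ → ℝ) (x : ℝ × ℝ × ℝ) : ℝ := fderiv ℝ f x (1, 0, 0)

/-- ∂η : partial derivative in the second (intermediate transverse) variable η. -/
def pη (f : ℝ × ℝ × ℝ → ℝ) (x : ℝ × ℝ × ℝ) : ℝ := fderiv ℝ f x (0, 1, 0)

/-- ∂v : partial derivative in the third (slow ray) variable v. -/
def pv (f : ℝ × ℝ × ℝ → ℝ) (x : ℝ × ℝ × ℝ) : ℝ := fderiv ℝ f x (0, 0, 1)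

/-- The transverse derivative Dη f = e^U (∂η f + Y ∂θ f). -/
def Dder (U Y f : ℝ × ℝ × ℝ → ℝ) (x : ℝ × ℝ × ℝ) : ℝ :=
  Real.exp (U x) * (pη f x + Y x * pθ f x)

/-- φ = Dη M − e^U Y_θ. -/
def phiF (U M Y : ℝ × ℝ × ℝ → ℝ) (x : ℝ × ℝ × ℝ) : ℝ :=
  Dder U Y M x - Real.exp (U x) * pθ Y x

/-- ψ = Dη (U + V). -/
def psiF (U V Y : ℝ × ℝ × ℝ → ℝ) (x : ℝ × ℝ × ℝ) : ℝ :=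
  Dder U Y (fun p => U p + V p) x

/-! ### Auxiliary derivative calculus -/

section Aux

variable {f g U V M Y : ℝ × ℝ × ℝ → ℝ} {x w : ℝ × ℝ × ℝ}

private lemma aux_d_add (hf : DifferentiableAt ℝ f x) (hg : DifferentiableAt ℝ g x)
    (w : ℝ × ℝ × ℝ) :
    fderiv ℝ (fun p => f p + g p) x w = fderiv ℝ f x w + fderiv ℝ g x w := by
  rw [fderiv_fun_add hf hg]; rfl

private lemma aux_d_sub (hf : DifferentiableAt ℝ f x) (hg : DifferentiableAt ℝ g x)
    (w : ℝ × ℝ × ℝ) :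
    fderiv ℝ (fun p => f p - g p) x w = fderiv ℝ f x w - fderiv ℝ g x w := by
  rw [fderiv_fun_sub hf hg]; rfl

private lemma aux_d_mul (hf : DifferentiableAt ℝ f x) (hg : DifferentiableAt ℝ g x)
    (w : ℝ × ℝ × ℝ) :
    fderiv ℝ (fun p => f p * g p) x w = f x * fderiv ℝ g x w + fderiv ℝ f x w * g x := by
  rw [fderiv_fun_mul hf hg]; simp [mul_comm]

private lemma aux_d_exp (hf : DifferentiableAt ℝ f x) (w : ℝ × ℝ × ℝ) :
    fderiv ℝ (fun p => Real.exp (f p)) x w = Real.exp (f x) * fderiv ℝ f x w := by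
  rw [fderiv_exp hf]; simp

private lemma aux_d_neg (w : ℝ × ℝ × ℝ) :
    fderiv ℝ (fun p => -(f p)) x w = -(fderiv ℝ f x w) := by
  rw [fderiv_fun_neg]; rfl

private lemma aux_d_const (c : ℝ) (w : ℝ × ℝ × ℝ) :
    fderiv ℝ (fun _ : ℝ × ℝ × ℝ => c) x w = 0 := by
  rw [fderiv_fun_const]; rfl

private lemma aux_contDiff_d (hf : ContDiff ℝ (⊤ : ℕ∞) f) (v : ℝ × ℝ × ℝ) :
    ContDiff ℝ (⊤ : ℕ∞) (fun y => fderiv ℝ f y v) :=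
  (ContinuousLinearMap.apply ℝ ℝ v).contDiff.comp (hf.fderiv_right (by simp))

private lemma aux_d_swap (hf : ContDiff ℝ (⊤ : ℕ∞) f) (x v w : ℝ × ℝ × ℝ) :
    fderiv ℝ (fun y => fderiv ℝ f y v) x w = fderiv ℝ (fun y => fderiv ℝ f y w) x v := by
  have h2 : DifferentiableAt ℝ (fderiv ℝ f) x :=
    ((hf.fderiv_right (m := (⊤ : ℕ∞)) (by simp)).differentiable (by simp)).differentiableAt
  have hs : IsSymmSndFDerivAt ℝ f x := hf.contDiffAt.isSymmSndFDerivAt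
    (by rw [minSmoothness_of_isRCLikeNormedField]; exact WithTop.coe_le_coe.mpr le_top)
  have key : ∀ u d : ℝ × ℝ × ℝ,
      fderiv ℝ (fun y => fderiv ℝ f y u) x d = fderiv ℝ (fderiv ℝ f) x d u := by
    intro u d
    rw [fderiv_clm_apply h2 (differentiableAt_const u)]
    simp
  rw [key v w, key w v]
  exact hs w v

/-! Directional wrappers. -/

private lemma pθ_add (hf : DifferentiableAt ℝ f x) (hg : DifferentiableAt ℝ g x) :
    pθ (fun p => f p + g p) x = pθ f x + pθ g x := aux_d_add hf hg _

private lemma pθ_sub (hf : DifferentiableAt ℝ f x) (hg : DifferentiableAt ℝ g x) :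
    pθ (fun p => f p - g p) x = pθ f x - pθ g x := aux_d_sub hf hg _

private lemma pθ_mul (hf : DifferentiableAt ℝ f x) (hg : DifferentiableAt ℝ g x) :
    pθ (fun p => f p * g p) x = f x * pθ g x + pθ f x * g x := aux_d_mul hf hg _

private lemma pθ_exp (hf : DifferentiableAt ℝ f x) :
    pθ (fun p => Real.exp (f p)) x = Real.exp (f x) * pθ f x := aux_d_exp hf _

private lemma pθ_neg (hf : DifferentiableAt ℝ f x) :
    pθ (fun p => -(f p)) x = -(pθ f x) := aux_d_neg _

private lemma pθ_const (c : ℝ) : pθ (fun _ : ℝ × ℝ × ℝ => c) x = 0 := aux_d_const c _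

private lemma pη_add (hf : DifferentiableAt ℝ f x) (hg : DifferentiableAt ℝ g x) :
    pη (fun p => f p + g p) x = pη f x + pη g x := aux_d_add hf hg _

private lemma pη_mul (hf : DifferentiableAt ℝ f x) (hg : DifferentiableAt ℝ g x) :
    pη (fun p => f p * g p) x = f x * pη g x + pη f x * g x := aux_d_mul hf hg _

private lemma pv_add (hf : DifferentiableAt ℝ f x) (hg : DifferentiableAt ℝ g x) :
    pv (fun p => f p + g p) x = pv f x + pv g x := aux_d_add hf hg _

private lemma pv_sub (hf : DifferentiableAt ℝ f x) (hg : DifferentiableAt ℝ g x) :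
    pv (fun p => f p - g p) x = pv f x - pv g x := aux_d_sub hf hg _

private lemma pv_mul (hf : DifferentiableAt ℝ f x) (hg : DifferentiableAt ℝ g x) :
    pv (fun p => f p * g p) x = f x * pv g x + pv f x * g x := aux_d_mul hf hg _

private lemma pv_const (c : ℝ) : pv (fun _ : ℝ × ℝ × ℝ => c) x = 0 := aux_d_const c _

private lemma pv_sq (hf : DifferentiableAt ℝ f x) :
    pv (fun p => f p ^ 2) x = 2 * f x * pv f x := by
  have h : (fun p => f p ^ 2) = fun p => f p * f p := by funext p; ring
  rw [h, pv_mul hf hf]; ring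

/-! Smoothness. -/

private lemma aux_smooth_pθ (hf : ContDiff ℝ (⊤ : ℕ∞) f) : ContDiff ℝ (⊤ : ℕ∞) (pθ f) :=
  aux_contDiff_d hf _

private lemma aux_smooth_pη (hf : ContDiff ℝ (⊤ : ℕ∞) f) : ContDiff ℝ (⊤ : ℕ∞) (pη f) :=
  aux_contDiff_d hf _

private lemma aux_smooth_pv (hf : ContDiff ℝ (⊤ : ℕ∞) f) : ContDiff ℝ (⊤ : ℕ∞) (pv f) :=
  aux_contDiff_d hf _

private lemma aux_smooth_Dder (hU : ContDiff ℝ (⊤ : ℕ∞) U) (hY : ContDiff ℝ (⊤ : ℕ∞) Y)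
    (hf : ContDiff ℝ (⊤ : ℕ∞) f) : ContDiff ℝ (⊤ : ℕ∞) (Dder U Y f) := by
  have h : Dder U Y f = fun x => Real.exp (U x) * (pη f x + Y x * pθ f x) := rfl
  rw [h]
  exact (Real.contDiff_exp.comp hU).mul
    ((aux_smooth_pη hf).add (hY.mul (aux_smooth_pθ hf)))

private lemma aux_smooth_phi (hU : ContDiff ℝ (⊤ : ℕ∞) U) (hM : ContDiff ℝ (⊤ : ℕ∞) M)
    (hY : ContDiff ℝ (⊤ : ℕ∞) Y) : ContDiff ℝ (⊤ : ℕ∞) (phiF U M Y) := by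
  have h : phiF U M Y = fun x => Dder U Y M x - Real.exp (U x) * pθ Y x := rfl
  rw [h]
  exact (aux_smooth_Dder hU hY hM).sub
    ((Real.contDiff_exp.comp hU).mul (aux_smooth_pθ hY))

private lemma aux_smooth_psi (hU : ContDiff ℝ (⊤ : ℕ∞) U) (hV : ContDiff ℝ (⊤ : ℕ∞) V)
    (hY : ContDiff ℝ (⊤ : ℕ∞) Y) : ContDiff ℝ (⊤ : ℕ∞) (psiF U V Y) :=
  aux_smooth_Dder hU hY (hU.add hV)

/-! Dη is a derivation, and the θ-commutator identity. -/

private lemma Dder_add (hf : ContDiff ℝ (⊤ : ℕ∞) f) (hg : ContDiff ℝ (⊤ : ℕ∞) g) (x : ℝ × ℝ × ℝ) :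
    Dder U Y (fun p => f p + g p) x = Dder U Y f x + Dder U Y g x := by
  unfold Dder
  rw [pθ_add (hf.differentiable (by simp) x) (hg.differentiable (by simp) x),
    pη_add (hf.differentiable (by simp) x) (hg.differentiable (by simp) x)]
  ring

private lemma Dder_mul (hf : ContDiff ℝ (⊤ : ℕ∞) f) (hg : ContDiff ℝ (⊤ : ℕ∞) g) (x : ℝ × ℝ × ℝ) :
    Dder U Y (fun p => f p * g p) x = f x * Dder U Y g x + Dder U Y f x * g x := by
  unfold Dder
  rw [pθ_mul (hf.differentiable (by simp) x) (hg.differentiable (by simp) x),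
    pη_mul (hf.differentiable (by simp) x) (hg.differentiable (by simp) x)]
  ring

private lemma pθ_Dder (hU : ContDiff ℝ (⊤ : ℕ∞) U) (hY : ContDiff ℝ (⊤ : ℕ∞) Y) (hf : ContDiff ℝ (⊤ : ℕ∞) f)
    (x : ℝ × ℝ × ℝ) :
    pθ (Dder U Y f) x = Dder U Y (pθ f) x + pθ U x * Dder U Y f x
      + Real.exp (U x) * pθ Y x * pθ f x := by
  have dU : DifferentiableAt ℝ U x := hU.differentiable (by simp) x
  have dY : DifferentiableAt ℝ Y x := hY.differentiable (by simp) x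
  have dηf : DifferentiableAt ℝ (pη f) x := (aux_smooth_pη hf).differentiable (by simp) x
  have dθf : DifferentiableAt ℝ (pθ f) x := (aux_smooth_pθ hf).differentiable (by simp) x
  have h : Dder U Y f = fun p => Real.exp (U p) * (pη f p + Y p * pθ f p) := rfl
  rw [h, pθ_mul (g := fun p => pη f p + Y p * pθ f p) dU.exp (dηf.add (dY.mul dθf)), pθ_exp dU,
    pθ_add (g := fun p => Y p * pθ f p) dηf (dY.mul dθf), pθ_mul dY dθf]
  have hswap : pθ (pη f) x = pη (pθ f) x := aux_d_swap hf x _ _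
  rw [hswap]
  unfold Dder
  ring

end Aux

/-- Constraint propagation: F_v = U_v F for F = U_θθ − ½(U_θ² + V_θ²) + U_θ M_θ. -/
theorem constraint_propagation (U V M Y : ℝ × ℝ × ℝ → ℝ)
    (hU : ContDiff ℝ (⊤ : ℕ∞) U) (hV : ContDiff ℝ (⊤ : ℕ∞) V) (hM : ContDiff ℝ (⊤ : ℕ∞) M)
    (hY : ContDiff ℝ (⊤ : ℕ∞) Y)
    (heqU : ∀ x : ℝ × ℝ × ℝ,
      pv (pθ U) x - pθ U x * pv U x
        = (1/2) * Real.exp (-(U x + V x + M x))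
            * (Dder U Y (phiF U M Y) x + Dder U Y (psiF U V Y) x
                - (1/2) * (phiF U M Y x)^2 - phiF U M Y x * psiF U V Y x
                - (psiF U V Y x)^2))
    (heqV : ∀ x : ℝ × ℝ × ℝ,
      pv (pθ V) x - (1/2) * (pθ U x * pv V x + pv U x * pθ V x)
        = (1/2) * Real.exp (-(U x + V x + M x))
            * (-(Dder U Y (phiF U M Y) x) + (1/2) * (phiF U M Y x)^2))
    (heqM : ∀ x : ℝ × ℝ × ℝ,
      pv (pθ M) x + (1/2) * (pθ U x * pv U x - pv V x * pθ V x)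
        = (1/2) * Real.exp (-(U x + V x + M x))
            * (-(Dder U Y (psiF U V Y) x) - (1/2) * (phiF U M Y x)^2
                + (psiF U V Y x)^2))
    (hYeq : ∀ x : ℝ × ℝ × ℝ,
      pθ (fun p => phiF U M Y p + psiF U V Y p) x
        = psiF U V Y x * pθ (fun p => U p + V p) x) :
    ∀ x : ℝ × ℝ × ℝ,
      pv (fun p => pθ (pθ U) p - (1/2) * ((pθ U p)^2 + (pθ V p)^2)
            + pθ U p * pθ M p) x
        = pv U x * (pθ (pθ U) x - (1/2) * ((pθ U x)^2 + (pθ V x)^2)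
            + pθ U x * pθ M x) := by
  intro x
  have hUV : ContDiff ℝ (⊤ : ℕ∞) (fun p => U p + V p) := hU.add hV
  have hφ : ContDiff ℝ (⊤ : ℕ∞) (phiF U M Y) := aux_smooth_phi hU hM hY
  have hψ : ContDiff ℝ (⊤ : ℕ∞) (psiF U V Y) := aux_smooth_psi hU hV hY
  have hDφ : ContDiff ℝ (⊤ : ℕ∞) (Dder U Y (phiF U M Y)) := aux_smooth_Dder hU hY hφ
  have hDψ : ContDiff ℝ (⊤ : ℕ∞) (Dder U Y (psiF U V Y)) := aux_smooth_Dder hU hY hψ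
  -- differentiability facts for `fun_prop`
  have dU : Differentiable ℝ U := hU.differentiable (by simp)
  have dV : Differentiable ℝ V := hV.differentiable (by simp)
  have dM : Differentiable ℝ M := hM.differentiable (by simp)
  have dY : Differentiable ℝ Y := hY.differentiable (by simp)
  have dθU : Differentiable ℝ (pθ U) := (aux_smooth_pθ hU).differentiable (by simp)
  have dθθU : Differentiable ℝ (pθ (pθ U)) :=
    (aux_smooth_pθ (aux_smooth_pθ hU)).differentiable (by simp)
  have dθV : Differentiable ℝ (pθ V) := (aux_smooth_pθ hV).differentiable (by simp)
  have dθM : Differentiable ℝ (pθ M) := (aux_smooth_pθ hM).differentiable (by simp)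
  have dvU : Differentiable ℝ (pv U) := (aux_smooth_pv hU).differentiable (by simp)
  have dφ : Differentiable ℝ (phiF U M Y) := hφ.differentiable (by simp)
  have dψ : Differentiable ℝ (psiF U V Y) := hψ.differentiable (by simp)
  have dDφ : Differentiable ℝ (Dder U Y (phiF U M Y)) := hDφ.differentiable (by simp)
  have dDψ : Differentiable ℝ (Dder U Y (psiF U V Y)) := hDψ.differentiable (by simp)
  -- pointwise rewrites of the evolution equations
  have hPUx : ∀ p, pv (pθ U) p = pθ U p * pv U p
      + 1/2 * Real.exp (-(U p + V p + M p)) *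
        (Dder U Y (phiF U M Y) p + Dder U Y (psiF U V Y) p
          - 1/2 * (phiF U M Y p * phiF U M Y p) - phiF U M Y p * psiF U V Y p
          - psiF U V Y p * psiF U V Y p) := by
    intro p; linear_combination heqU p
  have hPU : pv (pθ U) = fun p => pθ U p * pv U p
      + 1/2 * Real.exp (-(U p + V p + M p)) *
        (Dder U Y (phiF U M Y) p + Dder U Y (psiF U V Y) p
          - 1/2 * (phiF U M Y p * phiF U M Y p) - phiF U M Y p * psiF U V Y p
          - psiF U V Y p * psiF U V Y p) := funext hPUx
  have hPVx : pv (pθ V) x = 1/2 * (pθ U x * pv V x + pv U x * pθ V x)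
      + 1/2 * Real.exp (-(U x + V x + M x)) *
        (-(Dder U Y (phiF U M Y) x) + 1/2 * (phiF U M Y x * phiF U M Y x)) := by
    linear_combination heqV x
  have hPMx : pv (pθ M) x = -(1/2) * (pθ U x * pv U x - pv V x * pθ V x)
      + 1/2 * Real.exp (-(U x + V x + M x)) *
        (-(Dder U Y (psiF U V Y) x) - 1/2 * (phiF U M Y x * phiF U M Y x)
          + psiF U V Y x * psiF U V Y x) := by
    linear_combination heqM x
  -- swaps
  have hsw1 : pv (pθ (pθ U)) x = pθ (pv (pθ U)) x :=
    aux_d_swap (aux_smooth_pθ hU) x _ _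
  have hsw2 : pθ (pv U) x = pv (pθ U) x := aux_d_swap hU x _ _
  -- hYeq pointwise
  have hSx : ∀ p, pθ (fun q => U q + V q) p = pθ U p + pθ V p := fun p =>
    pθ_add (dU p) (dV p)
  have hYx : ∀ p, pθ (phiF U M Y) p + pθ (psiF U V Y) p
      = psiF U V Y p * (pθ U p + pθ V p) := by
    intro p
    have h := hYeq p
    rw [pθ_add (dφ p) (dψ p), hSx p] at h
    exact h
  -- commutator identities
  have hCφ := pθ_Dder hU hY hφ x
  have hCψ := pθ_Dder hU hY hψ x
  have hψfun : Dder U Y (fun p => U p + V p) = psiF U V Y := rfl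
  have hCS := pθ_Dder hU hY hUV x
  rw [hψfun, funext hSx] at hCS
  have hDS : Dder U Y (fun p => pθ U p + pθ V p) x
      = pθ (psiF U V Y) x - pθ U x * psiF U V Y x
        - Real.exp (U x) * pθ Y x * (pθ U x + pθ V x) := by
    linear_combination -hCS
  -- sum of transverse derivatives via the Y-equation
  have hsum : Dder U Y (pθ (phiF U M Y)) x
      = psiF U V Y x * Dder U Y (fun p => pθ U p + pθ V p) x
        + Dder U Y (psiF U V Y) x * (pθ U x + pθ V x)
        - Dder U Y (pθ (psiF U V Y)) x := by
    have h1 : Dder U Y (pθ (phiF U M Y)) x + Dder U Y (pθ (psiF U V Y)) x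
        = psiF U V Y x * Dder U Y (fun p => pθ U p + pθ V p) x
          + Dder U Y (psiF U V Y) x * (pθ U x + pθ V x) := by
      rw [← Dder_add (aux_smooth_pθ hφ) (aux_smooth_pθ hψ)]
      rw [show (fun p => pθ (phiF U M Y) p + pθ (psiF U V Y) p)
            = fun p => psiF U V Y p * (pθ U p + pθ V p) from funext hYx]
      rw [Dder_mul hψ ((aux_smooth_pθ hU).add (aux_smooth_pθ hV))]
    linarith
  have hφθ : pθ (phiF U M Y) x = psiF U V Y x * (pθ U x + pθ V x)
      - pθ (psiF U V Y) x := by linear_combination hYx x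
  -- assemble
  simp (disch := fun_prop) only [pv_add, pv_sub, pv_mul, pv_sq, pv_const]
  rw [hsw1, hPVx, hPMx, hPUx x, hPU]
  simp (disch := fun_prop) only [pθ_add, pθ_sub, pθ_mul, pθ_exp, pθ_neg, pθ_const]
  rw [hsw2, hPUx x, hCφ, hCψ, hsum, hDS, hφθ]
  ring
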